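/- Equality of LySep and PINN losses at the canonical auxiliary variables (elliptic case; the construction proving Theorem 2.2). If the auxiliary variables are taken to be the canonical ones, a₁ = W₁X+b₁𝟙ᵀ, a₂ = W₂σ(a₁)+b₂𝟙ᵀ, d_{1i} = W₁(:,i)𝟙ᵀ, d_{2i} = W₂(σ'(a₁)*d_{1i}), q_i = W₂(σ''(a₁)*d_{1i}*d_{1i}) for i = 1,…,d, then every penalty term in J^e_S vanishes, the LySep residual K^e*(W₃σ(a₂)+b₃𝟙ᵀ) + Σ_i K^e_i*(W₃(σ'(a₂)*d_{2i})) + K̂^e*Σ_i W₃(σ''(a₂)*d_{2i}*d_{2i}+σ'(a₂)*q_i) − Y equals the PINN residual Σ_{i=1}^d ∂_{x_i}(c·∂_{x_i}ψ_e)(X) − Y, and consequently J^e_S = J^e. -/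

import Mathlib

open scoped BigOperators

noncomputable section

/-- Partial derivative `∂_{x_i} f` at `x`. -/
def pd {m : ℕ} (f : (Fin m → ℝ) → ℝ) (i : Fin m) (x : Fin m → ℝ) : ℝ :=
  fderiv ℝ f x (Pi.single i 1)

/-- Squared Euclidean norm of the `n`-th column of an `M × N` matrix. -/
def colSq {M N : ℕ} (A : Fin M → Fin N → ℝ) (n : Fin N) : ℝ := ∑ j, (A j n) ^ 2

/-- Squared Frobenius norm of an `M × N` matrix. -/
def froSq {M N : ℕ} (A : Fin M → Fin N → ℝ) : ℝ := ∑ n, colSq A n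

/-- Squared Frobenius norm of a row vector (`1 × N` matrix). -/
def vSq {N : ℕ} (v : Fin N → ℝ) : ℝ := ∑ n, (v n) ^ 2

/-- Entrywise sup-norm `|v|_∞` of a row vector. -/
def nsup {N : ℕ} (v : Fin N → ℝ) : ℝ := ⨆ n, |v n|

/-- Weighted squared norm `‖A‖_D²`, where `Dsq n = D(n,n)²` are the squared diagonal
entries of the diagonal weight matrix `D`. -/
def wSq {M N : ℕ} (Dsq : Fin N → ℝ) (A : Fin M → Fin N → ℝ) : ℝ := ∑ n, Dsq n * colSq A n

/-- The constant `C₁ = max{B_{σ'}·max{1,B_{σ'}}, C_{σ'}·max{1,B_{σ'},C_σ}}`. -/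
def constC1 (Cσ Cσ' Bσ' : ℝ) : ℝ :=
  max (Bσ' * max 1 Bσ') (Cσ' * max (max 1 Bσ') Cσ)

/-- The constant `C₂`. -/
def constC2 (Cσ' Cσ'' Bσ' Bσ'' : ℝ) : ℝ :=
  max (Bσ'' * max (max (max (max 1 Bσ') Cσ') (Bσ' ^ 2)) (Bσ' * Cσ'))
    (max 1 Cσ' * max Cσ' (Bσ' * Cσ''))

/-- The constant `C = max{1, 2C_σ², 2C_σ⁴, 5C₁², 14C₂²}`. -/
def constC (Cσ Cσ' Cσ'' Bσ' Bσ'' : ℝ) : ℝ :=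
  max (max (max (max 1 (2 * Cσ ^ 2)) (2 * Cσ ^ 4)) (5 * constC1 Cσ Cσ' Bσ' ^ 2))
    (14 * constC2 Cσ' Cσ'' Bσ' Bσ'' ^ 2)

/-- Data of the elliptic PINN model with a three-layer fully connected network:
activation `σ`, PDE coefficient `c`, feature points `X` (columns `x_n`), data `Y`,
and network parameters `W₁, b₁, W₂, b₂, W₃, b₃`. -/
structure EllData (d M N : ℕ) where
  σ : ℝ → ℝ
  c : (Fin d → ℝ) → ℝ
  X : Fin d → Fin N → ℝ
  Y : Fin N → ℝ
  W1 : Fin M → Fin d → ℝ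
  b1 : Fin M → ℝ
  W2 : Fin M → Fin M → ℝ
  b2 : Fin M → ℝ
  W3 : Fin M → ℝ
  b3 : ℝ

/-- Auxiliary variables of the elliptic LySep model: `a₁, a₂` and, for each `i`,
`d_{1i}, d_{2i}, q_i`, all in `ℝ^{M×N}`. -/
structure EllAux (d M N : ℕ) where
  a1 : Fin M → Fin N → ℝ
  a2 : Fin M → Fin N → ℝ
  d1 : Fin d → Fin M → Fin N → ℝ
  d2 : Fin d → Fin M → Fin N → ℝ
  q  : Fin d → Fin M → Fin N → ℝ

namespace EllData

variable {d M N : ℕ} (P : EllData d M N) (A : EllAux d M N)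

/-- `σ'` -/
def σ' : ℝ → ℝ := deriv P.σ

/-- `σ''` -/
def σ'' : ℝ → ℝ := deriv (deriv P.σ)

/-- the `n`-th feature point `x_n` -/
def x (n : Fin N) : Fin d → ℝ := fun i => P.X i n

/-- the three-layer network `φ(x;θ) = W₃σ(W₂σ(W₁x+b₁)+b₂)+b₃` -/
def phi (y : Fin d → ℝ) : ℝ :=
  (∑ j, P.W3 j * P.σ ((∑ k, P.W2 j k * P.σ ((∑ i, P.W1 k i * y i) + P.b1 k)) + P.b2 j)) + P.b3

/-- `ψ_e(x;θ) = (‖x‖₂² − 1)φ(x;θ)` -/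
def psiE (y : Fin d → ℝ) : ℝ := ((∑ i, (y i) ^ 2) - 1) * P.phi y

/-- the `n`-th entry of the PINN residual `Σ_i ∂_{x_i}(c·∂_{x_i}ψ_e)(X) − Y` -/
def pinnRes (n : Fin N) : ℝ :=
  (∑ i, pd (fun y => P.c y * pd P.psiE i y) i (P.x n)) - P.Y n

/-- the PINN loss `J^e` -/
def Je : ℝ := (1 / (N : ℝ)) * ∑ n, (P.pinnRes n) ^ 2

/-- `c(X)` -/
def cX : Fin N → ℝ := fun n => P.c (P.x n)

/-- `∂_{x_i} c(X)` -/
def dcX (i : Fin d) : Fin N → ℝ := fun n => pd P.c i (P.x n)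

/-- `X̂`, the row vector of `‖x_n‖₂²` -/
def Xhat : Fin N → ℝ := fun n => ∑ i, (P.X i n) ^ 2

/-- `K^e = 2(d·c(X) + Σ_i X(i,:)*∂_{x_i}c(X))` -/
def Ke : Fin N → ℝ := fun n => 2 * ((d : ℝ) * P.cX n + ∑ i, P.X i n * P.dcX i n)

/-- `K̂^e = c(X)*(X̂−1)` -/
def Khat : Fin N → ℝ := fun n => P.cX n * (P.Xhat n - 1)

/-- `K^e_i = 4X(i,:)*c(X) + ∂_{x_i}c(X)*(X̂−1)` -/
def Ki (i : Fin d) : Fin N → ℝ := fun n => 4 * P.X i n * P.cX n + P.dcX i n * (P.Xhat n - 1)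

/-- `‖W₃‖_F²` -/
def w3sq : ℝ := ∑ j, (P.W3 j) ^ 2

/-- `‖W₂‖_F²` -/
def w2sq : ℝ := ∑ j, ∑ k, (P.W2 j k) ^ 2

/-- `‖W₁(:,i)‖₂²` -/
def w1colSq (i : Fin d) : ℝ := ∑ j, (P.W1 j i) ^ 2

/-- the `n`-th entry of the LySep residual
`K^e*(W₃σ(a₂)+b₃𝟙ᵀ) + Σ_i K^e_i*(W₃(σ'(a₂)*d_{2i})) + K̂^e*Σ_i W₃(σ''(a₂)*d_{2i}*d_{2i}+σ'(a₂)*q_i) − Y` -/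
def sRes (n : Fin N) : ℝ :=
  P.Ke n * ((∑ j, P.W3 j * P.σ (A.a2 j n)) + P.b3)
    + (∑ i, P.Ki i n * ∑ j, P.W3 j * (P.σ' (A.a2 j n) * A.d2 i j n))
    + P.Khat n *
        ∑ i, ∑ j, P.W3 j * (P.σ'' (A.a2 j n) * A.d2 i j n * A.d2 i j n + P.σ' (A.a2 j n) * A.q i j n)
    - P.Y n

/-- constraint residual `W₁X + b₁𝟙ᵀ − a₁` -/
def Ra1 : Fin M → Fin N → ℝ := fun j n => (∑ i, P.W1 j i * P.X i n) + P.b1 j - A.a1 j n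

/-- constraint residual `W₂σ(a₁) + b₂𝟙ᵀ − a₂` -/
def Ra2 : Fin M → Fin N → ℝ := fun j n => (∑ k, P.W2 j k * P.σ (A.a1 k n)) + P.b2 j - A.a2 j n

/-- constraint residual `W₁(:,i)𝟙ᵀ − d_{1i}` -/
def Rd1 (i : Fin d) : Fin M → Fin N → ℝ := fun j n => P.W1 j i - A.d1 i j n

/-- constraint residual `W₂(σ'(a₁)*d_{1i}) − d_{2i}` -/
def Rd2 (i : Fin d) : Fin M → Fin N → ℝ :=
  fun j n => (∑ k, P.W2 j k * (P.σ' (A.a1 k n) * A.d1 i k n)) - A.d2 i j n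

/-- constraint residual `W₂(σ''(a₁)*d_{1i}*d_{1i}) − q_i` -/
def Rq (i : Fin d) : Fin M → Fin N → ℝ :=
  fun j n => (∑ k, P.W2 j k * (P.σ'' (A.a1 k n) * A.d1 i k n * A.d1 i k n)) - A.q i j n

/-- `D_{a₂}¹(n,n)²` -/
def Da2_1sq (n : Fin N) : ℝ :=
  nsup P.Ke ^ 2 + ∑ i, (nsup (P.Ki i) ^ 2 * colSq (A.d2 i) n + nsup P.Khat ^ 2 * colSq (A.q i) n)

/-- `D_{a₂}^{2i}(n,n)²` -/
def Da2_2sq (i : Fin d) (n : Fin N) : ℝ := nsup P.Khat ^ 2 * colSq (A.d2 i) n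

/-- `D_{a₁}^{2i}(n,n)²` -/
def Da1_2sq (i : Fin d) (n : Fin N) : ℝ := nsup P.Khat ^ 2 * colSq (A.d1 i) n

/-- `D_{a₁}^{3i}(n,n)²` -/
def Da1_3sq (i : Fin d) (n : Fin N) : ℝ := P.Da1_2sq A i n + P.Da2_2sq A i n

/-- `D_{a₁}¹(n,n)²` -/
def Da1_1sq (n : Fin N) : ℝ :=
  P.Da2_1sq A n + ∑ i, (nsup (P.Ki i) ^ 2 * colSq (A.d1 i) n + P.Da1_2sq A i n * colSq (A.d2 i) n)

/-- `D_{d_{1i}}²(n,n)²` -/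
def Dd1_2sq (i : Fin d) (n : Fin N) : ℝ := nsup (P.Ki i) ^ 2 + P.Da1_3sq A i n

/-- `D_{d_{2i}}¹(n,n)²` -/
def Dd2_1sq (i : Fin d) (n : Fin N) : ℝ := nsup (P.Ki i) ^ 2 + P.Da2_2sq A i n

/-- the LySep loss `J^e_S` with self-adaptive weights `ω` and diagonal matrices `D`:
`ω_{a₁}¹ = ω_{d_{1i}}² = ‖W₃‖²‖W₂‖²`, `ω_{a₁}^{2i} = ω_{a₂}^{2i} = ω_{a₁}¹‖W₁(:,i)‖²`,
`ω_{a₁}^{3i} = ω_{a₁}^{2i}‖W₂‖²`, `ω_{a₂}¹ = ω_{d_{2i}}¹ = ‖W₃‖²`,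
`ω_{d_{1i}}¹ = |K̂^e|_∞²(ω_{a₁}^{2i}+ω_{a₁}^{3i})`, `ω_{d_{2i}}² = |K̂^e|_∞²ω_{a₁}^{2i}`,
`ω_{q_i} = |K̂^e|_∞²ω_{a₂}¹`, `D_{d_{1i}}¹ = D_{d_{2i}}² = I`. -/
def JeS : ℝ :=
  (1 / (N : ℝ)) *
    ((∑ n, (P.sRes A n) ^ 2)
      + P.w3sq * P.w2sq * wSq (P.Da1_1sq A) (P.Ra1 A)
      + (∑ i, P.w3sq * P.w2sq * P.w1colSq i * wSq (P.Da1_2sq A i) (P.Ra1 A))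
      + (∑ i, P.w3sq * P.w2sq * P.w1colSq i * P.w2sq * wSq (P.Da1_3sq A i) (P.Ra1 A))
      + P.w3sq * wSq (P.Da2_1sq A) (P.Ra2 A)
      + (∑ i, P.w3sq * P.w2sq * P.w1colSq i * wSq (P.Da2_2sq A i) (P.Ra2 A))
      + (∑ i, nsup P.Khat ^ 2 *
          (P.w3sq * P.w2sq * P.w1colSq i + P.w3sq * P.w2sq * P.w1colSq i * P.w2sq) *
          froSq (P.Rd1 A i))
      + (∑ i, P.w3sq * P.w2sq * wSq (P.Dd1_2sq A i) (P.Rd1 A i))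
      + (∑ i, P.w3sq * wSq (P.Dd2_1sq A i) (P.Rd2 A i))
      + (∑ i, nsup P.Khat ^ 2 * (P.w3sq * P.w2sq * P.w1colSq i) * froSq (P.Rd2 A i))
      + (∑ i, nsup P.Khat ^ 2 * P.w3sq * froSq (P.Rq A i)))

/-- canonical auxiliary variable `a₁ = W₁X + b₁𝟙ᵀ` -/
def cA1 : Fin M → Fin N → ℝ := fun j n => (∑ i, P.W1 j i * P.X i n) + P.b1 j

/-- canonical auxiliary variable `a₂ = W₂σ(a₁) + b₂𝟙ᵀ` -/
def cA2 : Fin M → Fin N → ℝ := fun j n => (∑ k, P.W2 j k * P.σ (P.cA1 k n)) + P.b2 j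

/-- canonical auxiliary variable `d_{1i} = W₁(:,i)𝟙ᵀ` -/
def cD1 (i : Fin d) : Fin M → Fin N → ℝ := fun j _ => P.W1 j i

/-- canonical auxiliary variable `d_{2i} = W₂(σ'(a₁)*d_{1i})` -/
def cD2 (i : Fin d) : Fin M → Fin N → ℝ :=
  fun j n => ∑ k, P.W2 j k * (P.σ' (P.cA1 k n) * P.W1 k i)

/-- canonical auxiliary variable `q_i = W₂(σ''(a₁)*d_{1i}*d_{1i})` -/
def cQ (i : Fin d) : Fin M → Fin N → ℝ :=
  fun j n => ∑ k, P.W2 j k * (P.σ'' (P.cA1 k n) * P.W1 k i * P.W1 k i)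

/-- the canonical auxiliary variables -/
def canonAux : EllAux d M N := ⟨P.cA1, P.cA2, P.cD1, P.cD2, P.cQ⟩

end EllData

/-!
Along a coordinate line `t ↦ x_n + t e_i` everything reduces to one-variable calculus:
`∂_{x_i}ψ_e(x_n)` and `∂²_{x_i}ψ_e(x_n)` are the first two derivatives of `t ↦ ψ_e(x_n + t e_i)`
at `0`. On that line the first-layer pre-activations are `a₁ + t W₁(:,i)`, so the chain rule turns
the second-layer pre-activation and its first two derivatives at `0` into exactly the canonical
`a₂`, `d_{2i}` and `q_i`. The product rule for `c · ∂_{x_i}ψ_e` then regroups into the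
coefficients `K^e`, `K^e_i`, `K̂^e` of the LySep residual, and the penalty terms vanish because the
canonical variables satisfy their constraints exactly.
-/

structure HasDeriv2 (f f' f'' : ℝ → ℝ) : Prop where
  hasDerivAt : ∀ t, HasDerivAt f (f' t) t
  hasDerivAt_deriv : ∀ t, HasDerivAt f' (f'' t) t

namespace HasDeriv2

variable {f f' f'' g g' g'' : ℝ → ℝ}

lemma affine (a b : ℝ) : HasDeriv2 (fun t => a + t * b) (fun _ => b) (fun _ => 0) where
  hasDerivAt t := by simpa using ((hasDerivAt_id t).mul_const b).const_add a
  hasDerivAt_deriv _ := hasDerivAt_const _ _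

lemma quadratic (a b : ℝ) :
    HasDeriv2 (fun t => a + t * b + t ^ 2) (fun t => b + 2 * t) (fun _ => 2) where
  hasDerivAt t := by
    simpa using (((hasDerivAt_id t).mul_const b).const_add a).fun_add (hasDerivAt_pow 2 t)
  hasDerivAt_deriv t := by simpa using ((hasDerivAt_id t).const_mul 2).const_add b

lemma add_const (h : HasDeriv2 f f' f'') (c : ℝ) : HasDeriv2 (fun t => f t + c) f' f'' where
  hasDerivAt t := (h.hasDerivAt t).add_const c
  hasDerivAt_deriv := h.hasDerivAt_deriv

lemma const_mul (h : HasDeriv2 f f' f'') (c : ℝ) :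
    HasDeriv2 (fun t => c * f t) (fun t => c * f' t) (fun t => c * f'' t) where
  hasDerivAt t := (h.hasDerivAt t).const_mul c
  hasDerivAt_deriv t := (h.hasDerivAt_deriv t).const_mul c

lemma sum {ι : Type*} (s : Finset ι) {F F' F'' : ι → ℝ → ℝ}
    (h : ∀ k, HasDeriv2 (F k) (F' k) (F'' k)) :
    HasDeriv2 (fun t => ∑ k ∈ s, F k t) (fun t => ∑ k ∈ s, F' k t)
      (fun t => ∑ k ∈ s, F'' k t) where
  hasDerivAt t := HasDerivAt.fun_sum fun k _ => (h k).hasDerivAt t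
  hasDerivAt_deriv t := HasDerivAt.fun_sum fun k _ => (h k).hasDerivAt_deriv t

lemma mul (hf : HasDeriv2 f f' f'') (hg : HasDeriv2 g g' g'') :
    HasDeriv2 (fun t => f t * g t) (fun t => f' t * g t + f t * g' t)
      (fun t => f'' t * g t + 2 * (f' t * g' t) + f t * g'' t) where
  hasDerivAt t := (hf.hasDerivAt t).mul (hg.hasDerivAt t)
  hasDerivAt_deriv t :=
    (((hf.hasDerivAt_deriv t).fun_mul (hg.hasDerivAt t)).fun_add
      ((hf.hasDerivAt t).fun_mul (hg.hasDerivAt_deriv t))).congr_deriv (by ring)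

lemma comp (hg : HasDeriv2 g g' g'') (hf : HasDeriv2 f f' f'') :
    HasDeriv2 (fun t => g (f t)) (fun t => g' (f t) * f' t)
      (fun t => g'' (f t) * f' t ^ 2 + g' (f t) * f'' t) where
  hasDerivAt t := (hg.hasDerivAt (f t)).comp t (hf.hasDerivAt t)
  hasDerivAt_deriv t :=
    (((hg.hasDerivAt_deriv (f t)).comp t (hf.hasDerivAt t)).fun_mul
      (hf.hasDerivAt_deriv t)).congr_deriv (by simp only [Function.comp_apply]; ring)

end HasDeriv2

lemma ContDiff.hasDeriv2 {σ : ℝ → ℝ} (hσ : ContDiff ℝ 2 σ) :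
    HasDeriv2 σ (deriv σ) (deriv (deriv σ)) where
  hasDerivAt t := (hσ.differentiable two_ne_zero t).hasDerivAt
  hasDerivAt_deriv t :=
    ((contDiff_succ_iff_deriv (n := 1)).mp hσ |>.2.2.differentiable one_ne_zero t).hasDerivAt

section PartialDeriv

variable {m : ℕ} {f g : (Fin m → ℝ) → ℝ} {x : Fin m → ℝ} {i : Fin m}

lemma hasDerivAt_comp_add_single {t : ℝ} (hf : DifferentiableAt ℝ f (x + Pi.single i t)) :
    HasDerivAt (fun s => f (x + Pi.single i s)) (pd f i (x + Pi.single i t)) t :=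
  hf.hasFDerivAt.comp_hasDerivAt t ((hasDerivAt_single i t).const_add x)

lemma HasDeriv2.pd_eq {g' g'' : ℝ → ℝ} (hf : DifferentiableAt ℝ f x)
    (h : HasDeriv2 (fun t => f (x + Pi.single i t)) g' g'') : pd f i x = g' 0 := by
  have hx : DifferentiableAt ℝ f (x + Pi.single i 0) := by simpa using hf
  simpa using (hasDerivAt_comp_add_single hx).unique (h.hasDerivAt 0)

lemma HasDeriv2.pd_pd_eq {g' g'' : ℝ → ℝ} (hf : Differentiable ℝ f)
    (hf' : DifferentiableAt ℝ (pd f i) x)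
    (h : HasDeriv2 (fun t => f (x + Pi.single i t)) g' g'') : pd (pd f i) i x = g'' 0 := by
  have hline : (fun t => pd f i (x + Pi.single i t)) = g' :=
    funext fun t => (hasDerivAt_comp_add_single (hf _)).unique (h.hasDerivAt t)
  have hx : DifferentiableAt ℝ (pd f i) (x + Pi.single i 0) := by simpa using hf'
  have := hasDerivAt_comp_add_single hx
  rw [hline] at this
  simpa using this.unique (h.hasDerivAt_deriv 0)

lemma pd_mul (hf : DifferentiableAt ℝ f x) (hg : DifferentiableAt ℝ g x) :
    pd (fun y => f y * g y) i x = pd f i x * g x + f x * pd g i x := by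
  simp only [pd, fderiv_fun_mul hf hg, add_apply, smul_apply, smul_eq_mul]
  ring

lemma ContDiff.pd {n : WithTop ℕ∞} (hf : ContDiff ℝ (n + 1) f) (i : Fin m) :
    ContDiff ℝ n (pd f i) :=
  (hf.fderiv_right le_rfl).clm_apply contDiff_const

lemma sum_mul_add_single (w y : Fin m → ℝ) (t : ℝ) :
    ∑ l, w l * (y + Pi.single i t : Fin m → ℝ) l = ∑ l, w l * y l + t * w i := by
  simp [mul_add, Finset.sum_add_distrib, Pi.single_apply, mul_comm]

lemma sum_sq_add_single (y : Fin m → ℝ) (t : ℝ) :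
    ∑ l, (y + Pi.single i t : Fin m → ℝ) l ^ 2 = ∑ l, y l ^ 2 + t * (2 * y i) + t ^ 2 := by
  simp only [Pi.add_apply, add_sq, Finset.sum_add_distrib]
  simp [Pi.single_apply, mul_ite, ite_pow]
  ring

end PartialDeriv

@[simp]
lemma wSq_zero {M N : ℕ} (Dsq : Fin N → ℝ) : wSq Dsq (0 : Fin M → Fin N → ℝ) = 0 := by
  simp [wSq, colSq]

@[simp]
lemma froSq_zero {M N : ℕ} : froSq (0 : Fin M → Fin N → ℝ) = 0 := by
  simp [froSq, colSq]

namespace EllData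

variable {d M N : ℕ} (P : EllData d M N)

/- `W₃(σ'(a₂)*d_{2i})` and `W₃(σ''(a₂)*d_{2i}*d_{2i}+σ'(a₂)*q_i)` at the canonical auxiliary
variables; they turn out to be `∂_{x_i}φ(x_n)` and `∂²_{x_i}φ(x_n)`. -/
def phiD (i : Fin d) (n : Fin N) : ℝ := ∑ j, P.W3 j * (P.σ' (P.cA2 j n) * P.cD2 i j n)

def phiDD (i : Fin d) (n : Fin N) : ℝ :=
  ∑ j, P.W3 j * (P.σ'' (P.cA2 j n) * P.cD2 i j n * P.cD2 i j n + P.σ' (P.cA2 j n) * P.cQ i j n)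

lemma phi_x_add_single (n : Fin N) (i : Fin d) (t : ℝ) :
    P.phi (P.x n + Pi.single i t) =
      ∑ j, P.W3 j * P.σ (∑ k, P.W2 j k * P.σ (P.cA1 k n + t * P.W1 k i) + P.b2 j) + P.b3 := by
  simp only [phi, sum_mul_add_single, cA1, add_right_comm _ (_ * _)]
  rfl

lemma hasDeriv2_phi_x_add_single (hσ : ContDiff ℝ 2 P.σ) (n : Fin N) (i : Fin d) :
    ∃ φ' φ'', HasDeriv2 (fun t => P.phi (P.x n + Pi.single i t)) φ' φ'' ∧
      φ' 0 = P.phiD i n ∧ φ'' 0 = P.phiDD i n := by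
  have hσ2 : HasDeriv2 P.σ P.σ' P.σ'' := hσ.hasDeriv2
  have hA2 : ∀ j, HasDeriv2 (fun t => ∑ k, P.W2 j k * P.σ (P.cA1 k n + t * P.W1 k i) + P.b2 j)
      (fun t => ∑ k, P.W2 j k * (P.σ' (P.cA1 k n + t * P.W1 k i) * P.W1 k i))
      (fun t => ∑ k, P.W2 j k *
        (P.σ'' (P.cA1 k n + t * P.W1 k i) * P.W1 k i ^ 2 + P.σ' (P.cA1 k n + t * P.W1 k i) * 0)) :=
    fun j => (HasDeriv2.sum _ fun k => (hσ2.comp (.affine _ _)).const_mul _).add_const _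
  have hφ :=
    (HasDeriv2.sum Finset.univ fun j => (hσ2.comp (hA2 j)).const_mul (P.W3 j)).add_const P.b3
  refine ⟨_, _, funext (P.phi_x_add_single n i) ▸ hφ, ?_, ?_⟩
  · simp [phiD, cA2, cD2]
  · simp [phiDD, cA2, cD2, cQ, pow_two, mul_assoc]

lemma contDiff_psiE (hσ : ContDiff ℝ 2 P.σ) : ContDiff ℝ 2 P.psiE := by
  unfold psiE phi
  fun_prop

lemma hasDeriv2_psiE_x_add_single (hσ : ContDiff ℝ 2 P.σ) (n : Fin N) (i : Fin d) :
    ∃ ψ' ψ'', HasDeriv2 (fun t => P.psiE (P.x n + Pi.single i t)) ψ' ψ'' ∧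
      ψ' 0 = 2 * P.X i n * P.phi (P.x n) + (P.Xhat n - 1) * P.phiD i n ∧
      ψ'' 0 = 2 * P.phi (P.x n) + 4 * P.X i n * P.phiD i n + (P.Xhat n - 1) * P.phiDD i n := by
  obtain ⟨φ', φ'', hφ, hφ', hφ''⟩ := P.hasDeriv2_phi_x_add_single hσ n i
  have hline : (fun t => P.psiE (P.x n + Pi.single i t)) = fun t =>
      (P.Xhat n - 1 + t * (2 * P.X i n) + t ^ 2) * P.phi (P.x n + Pi.single i t) :=
    funext fun t => by
      rw [psiE, sum_sq_add_single, Xhat, sub_add_eq_add_sub, sub_add_eq_add_sub]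
      rfl
  refine ⟨_, _, hline ▸ (HasDeriv2.quadratic _ _).mul hφ, ?_, ?_⟩
  · simp [hφ']
  · simp [hφ', hφ'']
    ring

lemma pd_psiE (hσ : ContDiff ℝ 2 P.σ) (n : Fin N) (i : Fin d) :
    pd P.psiE i (P.x n) = 2 * P.X i n * P.phi (P.x n) + (P.Xhat n - 1) * P.phiD i n := by
  obtain ⟨ψ', ψ'', hψ, hψ', -⟩ := P.hasDeriv2_psiE_x_add_single hσ n i
  rw [hψ.pd_eq ((P.contDiff_psiE hσ).differentiable two_ne_zero _), hψ']

lemma pd_pd_psiE (hσ : ContDiff ℝ 2 P.σ) (n : Fin N) (i : Fin d) :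
    pd (pd P.psiE i) i (P.x n) =
      2 * P.phi (P.x n) + 4 * P.X i n * P.phiD i n + (P.Xhat n - 1) * P.phiDD i n := by
  obtain ⟨ψ', ψ'', hψ, -, hψ''⟩ := P.hasDeriv2_psiE_x_add_single hσ n i
  have hψE : ContDiff ℝ (1 + 1) P.psiE := P.contDiff_psiE hσ
  rw [hψ.pd_pd_eq (hψE.differentiable two_ne_zero) ((hψE.pd i).differentiable one_ne_zero _), hψ'']

lemma pd_c_mul_pd_psiE (hσ : ContDiff ℝ 2 P.σ) (hc : ContDiff ℝ 1 P.c) (n : Fin N) (i : Fin d) :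
    pd (fun y => P.c y * pd P.psiE i y) i (P.x n) =
      P.dcX i n * (2 * P.X i n * P.phi (P.x n) + (P.Xhat n - 1) * P.phiD i n) +
        P.cX n * (2 * P.phi (P.x n) + 4 * P.X i n * P.phiD i n + (P.Xhat n - 1) * P.phiDD i n) := by
  have hψE : ContDiff ℝ (1 + 1) P.psiE := P.contDiff_psiE hσ
  rw [pd_mul (hc.differentiable one_ne_zero _) ((hψE.pd i).differentiable one_ne_zero _),
    P.pd_psiE hσ, P.pd_pd_psiE hσ]
  rfl

lemma sRes_canonAux (hσ : ContDiff ℝ 2 P.σ) (hc : ContDiff ℝ 1 P.c) (n : Fin N) :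
    P.sRes P.canonAux n = P.pinnRes n := by
  have hsRes : P.sRes P.canonAux n = P.Ke n * P.phi (P.x n) + ∑ i, P.Ki i n * P.phiD i n +
      P.Khat n * ∑ i, P.phiDD i n - P.Y n := rfl
  have hsum : P.Ke n * P.phi (P.x n) + ∑ i, P.Ki i n * P.phiD i n + P.Khat n * ∑ i, P.phiDD i n =
      ∑ i, (2 * P.cX n * P.phi (P.x n) + P.X i n * P.dcX i n * (2 * P.phi (P.x n)) +
        P.Ki i n * P.phiD i n + P.Khat n * P.phiDD i n) := by
    simp only [Ke, Finset.sum_add_distrib, ← Finset.sum_mul, ← Finset.mul_sum, Finset.sum_const,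
      Finset.card_univ, Fintype.card_fin, nsmul_eq_mul]
    ring
  rw [hsRes, hsum, pinnRes]
  congr 1
  refine Finset.sum_congr rfl fun i _ => ?_
  rw [P.pd_c_mul_pd_psiE hσ hc n i, Ki, Khat]
  ring

lemma Ra1_canonAux : P.Ra1 P.canonAux = 0 := funext₂ fun _ _ => sub_self _

lemma Ra2_canonAux : P.Ra2 P.canonAux = 0 := funext₂ fun _ _ => sub_self _

lemma Rd1_canonAux (i : Fin d) : P.Rd1 P.canonAux i = 0 := funext₂ fun _ _ => sub_self _

lemma Rd2_canonAux (i : Fin d) : P.Rd2 P.canonAux i = 0 := funext₂ fun _ _ => sub_self _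

lemma Rq_canonAux (i : Fin d) : P.Rq P.canonAux i = 0 := funext₂ fun _ _ => sub_self _

lemma JeS_canonAux : P.JeS P.canonAux = 1 / N * ∑ n, P.sRes P.canonAux n ^ 2 := by
  simp [JeS, Ra1_canonAux, Ra2_canonAux, Rd1_canonAux, Rd2_canonAux, Rq_canonAux]

end EllData

theorem elliptic_lysep_canonical_equality_general
    {d M N : ℕ}
    (P : EllData d M N)
    (hσ : ContDiff ℝ 2 P.σ) (hc : ContDiff ℝ 1 P.c) :
    (∀ j n, P.Ra1 P.canonAux j n = 0) ∧
    (∀ j n, P.Ra2 P.canonAux j n = 0) ∧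
    (∀ i j n, P.Rd1 P.canonAux i j n = 0) ∧
    (∀ i j n, P.Rd2 P.canonAux i j n = 0) ∧
    (∀ i j n, P.Rq P.canonAux i j n = 0) ∧
    (∀ n, P.sRes P.canonAux n = P.pinnRes n) ∧
    P.JeS P.canonAux = P.Je := by
  refine ⟨congrFun₂ P.Ra1_canonAux, congrFun₂ P.Ra2_canonAux,
    fun i => congrFun₂ (P.Rd1_canonAux i), fun i => congrFun₂ (P.Rd2_canonAux i),
    fun i => congrFun₂ (P.Rq_canonAux i), P.sRes_canonAux hσ hc, ?_⟩
  simp only [P.JeS_canonAux, P.sRes_canonAux hσ hc, EllData.Je]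

/-- Equality of the LySep and PINN losses at the canonical auxiliary variables
(the construction proving Theorem 2.2): with `a₁ = W₁X+b₁𝟙ᵀ`, `a₂ = W₂σ(a₁)+b₂𝟙ᵀ`,
`d_{1i} = W₁(:,i)𝟙ᵀ`, `d_{2i} = W₂(σ'(a₁)*d_{1i})`, `q_i = W₂(σ''(a₁)*d_{1i}*d_{1i})`,
every penalty term of `J^e_S` vanishes, the LySep residual equals the PINN residual,
and consequently `J^e_S = J^e`. -/
theorem elliptic_lysep_canonical_equality
    {d M N : ℕ} (hd : 0 < d) (hM : 0 < M) (hN : 0 < N)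
    (P : EllData d M N)
    (hσ : ContDiff ℝ 2 P.σ) (hc : ContDiff ℝ 1 P.c) :
    (∀ j n, P.Ra1 P.canonAux j n = 0) ∧
    (∀ j n, P.Ra2 P.canonAux j n = 0) ∧
    (∀ i j n, P.Rd1 P.canonAux i j n = 0) ∧
    (∀ i j n, P.Rd2 P.canonAux i j n = 0) ∧
    (∀ i j n, P.Rq P.canonAux i j n = 0) ∧
    (∀ n, P.sRes P.canonAux n = P.pinnRes n) ∧
    P.JeS P.canonAux = P.Je :=
  elliptic_lysep_canonical_equality_general P hσ hc
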